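/- For all n ≥ 2, the designs X_n generated by the greedy-packing algorithm satisfy MR(X_n) ≤ 2. -/

import Mathlib

open Metric Set MeasureTheory

/-- Distance from a point `x` to the nearest point of the design `D`. -/
noncomputable def minDist {E : Type*} [NormedAddCommGroup E] (D : Finset E) (x : E) : ℝ :=
  sInf ((fun p => dist x p) '' (D : Set E))

/-- Fill distance (covering radius) of the design `D` for the set `A`:
`CR_A(D) = sup_{x ∈ A} min_{p ∈ D} ‖x - p‖`. -/
noncomputable def fillDist {E : Type*} [NormedAddCommGroup E] (A : Set E) (D : Finset E) : ℝ :=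
  sSup ((fun x => minDist D x) '' A)

/-- Separation radius of the design `D`:
`SR(D) = (1/2) min_{p ≠ q ∈ D} ‖p - q‖`. -/
noncomputable def sepRad {E : Type*} [NormedAddCommGroup E] (D : Finset E) : ℝ :=
  (1 / 2) * sInf ((fun p : E × E => dist p.1 p.2) '' {p | p.1 ∈ D ∧ p.2 ∈ D ∧ p.1 ≠ p.2})

/-- Mesh-ratio of the design `D` for the set `A`: `MR(D) = CR_A(D) / SR(D)`. -/
noncomputable def meshRatio {E : Type*} [NormedAddCommGroup E] (A : Set E) (D : Finset E) : ℝ :=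
  fillDist A D / sepRad D

/-- The nested design consisting of the first `n` points of the sequence `x`. -/
noncomputable def design {E : Type*} (x : ℕ → E) (n : ℕ) : Finset E :=
  letI := Classical.decEq E
  (Finset.range n).image x

/-! Greedy packing places `x_j` at distance exactly `CR(X_j)` from `X_j`, and fill distances
decrease along nested designs, so any two points `x_i, x_j` (`i < j < n`) of `X_n` are at
distance at least `CR(X_j) ≥ CR(X_n)`. Hence `SR(X_n) ≥ CR(X_n) / 2`. -/

section Design

variable {E : Type*} (x : ℕ → E)

lemma mem_design_iff {n : ℕ} {p : E} : p ∈ design x n ↔ ∃ i < n, x i = p := by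
  simp only [design, Finset.mem_image, Finset.mem_range]

lemma mem_design {i n : ℕ} (h : i < n) : x i ∈ design x n :=
  (mem_design_iff x).2 ⟨i, h, rfl⟩

lemma design_mono {m n : ℕ} (h : m ≤ n) : design x m ⊆ design x n := by
  intro p hp
  obtain ⟨i, hi, rfl⟩ := (mem_design_iff x).1 hp
  exact mem_design x (hi.trans_le h)

end Design

section Radii

variable {E : Type*} [NormedAddCommGroup E]

lemma minDist_nonneg (D : Finset E) (y : E) : 0 ≤ minDist D y :=
  Real.sInf_nonneg (by rintro r ⟨p, _, rfl⟩; exact dist_nonneg)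

lemma minDist_le_dist {D : Finset E} {p : E} (hp : p ∈ D) (y : E) : minDist D y ≤ dist y p :=
  csInf_le ⟨0, by rintro r ⟨q, _, rfl⟩; exact dist_nonneg⟩ ⟨p, hp, rfl⟩

lemma minDist_anti {D D' : Finset E} (h : D ⊆ D') (hD : D.Nonempty) (y : E) :
    minDist D' y ≤ minDist D y := by
  obtain ⟨p, hp⟩ := hD
  refine le_csInf ⟨dist y p, p, hp, rfl⟩ ?_
  rintro r ⟨q, hq, rfl⟩
  exact minDist_le_dist (h hq) y

lemma minDist_le_fillDist {A : Set E} (hA : Bornology.IsBounded A) {D : Finset E}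
    (hD : D.Nonempty) {y : E} (hy : y ∈ A) : minDist D y ≤ fillDist A D := by
  obtain ⟨p, hp⟩ := hD
  obtain ⟨C, hC⟩ := hA.subset_closedBall p
  refine le_csSup ⟨C, ?_⟩ ⟨y, hy, rfl⟩
  rintro r ⟨z, hz, rfl⟩
  exact (minDist_le_dist hp z).trans (mem_closedBall.1 (hC hz))

lemma fillDist_nonneg (A : Set E) (D : Finset E) : 0 ≤ fillDist A D :=
  Real.sSup_nonneg (by rintro r ⟨y, _, rfl⟩; exact minDist_nonneg D y)

lemma fillDist_anti {A : Set E} (hA : Bornology.IsBounded A) {D D' : Finset E} (h : D ⊆ D')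
    (hD : D.Nonempty) : fillDist A D' ≤ fillDist A D := by
  refine Real.sSup_le ?_ (fillDist_nonneg A D)
  rintro r ⟨y, hy, rfl⟩
  exact (minDist_anti h hD y).trans (minDist_le_fillDist hA hD hy)

lemma sepRad_nonneg (D : Finset E) : 0 ≤ sepRad D :=
  mul_nonneg (by norm_num) (Real.sInf_nonneg (by rintro r ⟨_, _, rfl⟩; exact dist_nonneg))

lemma half_le_sepRad {D : Finset E} {r : ℝ} (hD : ∃ p ∈ D, ∃ q ∈ D, p ≠ q)
    (hr : ∀ p ∈ D, ∀ q ∈ D, p ≠ q → r ≤ dist p q) : r / 2 ≤ sepRad D := by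
  obtain ⟨p, hp, q, hq, hpq⟩ := hD
  have : r ≤ sInf ((fun p : E × E => dist p.1 p.2) ''
      {p | p.1 ∈ D ∧ p.2 ∈ D ∧ p.1 ≠ p.2}) := by
    refine le_csInf ⟨dist p q, (p, q), ⟨hp, hq, hpq⟩, rfl⟩ ?_
    rintro s ⟨⟨p', q'⟩, ⟨hp', hq', hpq'⟩, rfl⟩
    exact hr p' hp' q' hq' hpq'
  rw [sepRad]
  linarith

lemma meshRatio_le {A : Set E} {D : Finset E} {c : ℝ} (hc : 0 ≤ c)
    (h : fillDist A D ≤ c * sepRad D) : meshRatio A D ≤ c :=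
  div_le_of_le_mul₀ (sepRad_nonneg D) hc h

end Radii

section Greedy

variable {E : Type*} [NormedAddCommGroup E] {S : Set E} {x : ℕ → E}

lemma fillDist_design_le_dist_of_lt (hS : Bornology.IsBounded S) {i j n : ℕ} (hij : i < j)
    (hjn : j < n)
    (hj : minDist (design x j) (x j) = fillDist S (design x j)) :
    fillDist S (design x n) ≤ dist (x i) (x j) :=
  calc fillDist S (design x n)
      ≤ fillDist S (design x j) :=
        fillDist_anti hS (design_mono x hjn.le) ⟨x 0, mem_design x (by omega)⟩
    _ = minDist (design x j) (x j) := hj.symm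
    _ ≤ dist (x j) (x i) := minDist_le_dist (mem_design x hij) _
    _ = dist (x i) (x j) := dist_comm _ _

lemma fillDist_design_le_dist (hS : Bornology.IsBounded S)
    (hgreedy : ∀ k, 1 ≤ k → minDist (design x k) (x k) = fillDist S (design x k)) {n : ℕ}
    (p : E) (hp : p ∈ design x n) (q : E) (hq : q ∈ design x n) (hpq : p ≠ q) :
    fillDist S (design x n) ≤ dist p q := by
  obtain ⟨i, hi, rfl⟩ := (mem_design_iff x).1 hp
  obtain ⟨j, hj, rfl⟩ := (mem_design_iff x).1 hq
  rcases lt_or_gt_of_ne (fun h : i = j => hpq (congrArg x h)) with h | h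
  · exact fillDist_design_le_dist_of_lt hS h hj (hgreedy j (by omega))
  · rw [dist_comm]
    exact fillDist_design_le_dist_of_lt hS h hi (hgreedy i (by omega))

end Greedy

theorem statement8_general
    {E : Type*} [NormedAddCommGroup E]
    (S : Set E) (hS : IsCompact S)
    (x : ℕ → E) (hinj : Function.Injective x)
    (hgreedy : ∀ k : ℕ, 1 ≤ k →
      x k ∈ S ∧ minDist (design x k) (x k) = fillDist S (design x k))
    (n : ℕ) (hn : 2 ≤ n) :
    meshRatio S (design x n) ≤ 2 := by
  have hpair : ∃ p ∈ design x n, ∃ q ∈ design x n, p ≠ q :=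
    ⟨x 0, mem_design x (by omega), x 1, mem_design x (by omega), hinj.ne (by omega)⟩
  have hsep := half_le_sepRad hpair
    (fillDist_design_le_dist hS.isBounded (fun k hk => (hgreedy k hk).2))
  exact meshRatio_le zero_le_two (by linarith)

/-- For all `n ≥ 2`, the designs `Xₙ` generated by the greedy-packing
algorithm satisfy `MR(Xₙ) ≤ 2`. -/
theorem statement8 {d : ℕ} (hd : 1 ≤ d)
    {E : Type*} [NormedAddCommGroup E] [NormedSpace ℝ E] [FiniteDimensional ℝ E]
    (hdim : Module.finrank ℝ E = d)
    (S : Set E) (hS : IsCompact S)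
    (x : ℕ → E) (hinj : Function.Injective x) (hx0 : x 0 ∈ S)
    (hgreedy : ∀ k : ℕ, 1 ≤ k →
      x k ∈ S ∧ minDist (design x k) (x k) = fillDist S (design x k))
    (n : ℕ) (hn : 2 ≤ n) :
    meshRatio S (design x n) ≤ 2 :=
  statement8_general S hS x hinj hgreedy n hn
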